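/- For every integer b ≥ 1 and every real β with 0 ≤ β ≤ 1, defining α(β,b) := 1 − e^{−bβ}(bβ)^b/b! − e^{−bβ}(1−β)·Σ_{k=0}^{b−1}(bβ)^k/k!, one has |α(β,b) − β| ≤ (eβ)^b; in particular, for fixed β < 1/e the gap |α(β,b) − β| is exponentially small in b. -/

import Mathlib

/-!
With `x = bβ`, `E = e^{-x}` and `T = x^b/b!`, one has
`α(β,b) - β = (1 - β)·P - E·T`, where `P = 1 - E·Σ_{k<b} x^k/k!` is the probability that a
Poisson(`x`) variable is at least `b`. Comparing the tail of the exponential series termwise with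
`T·e^x` gives `0 ≤ P ≤ T`, so `α(β,b) - β` lies in `[-T, T]`, and `T ≤ (eβ)^b` by `b^b/b! ≤ e^b`.
-/

/-- The fraction of balls removed per round when bin loads are Poisson with parameter `bβ`:
`α(β,b) := 1 − e^{−bβ}(bβ)^b/b! − e^{−bβ}(1−β)·Σ_{k=0}^{b−1}(bβ)^k/k!`. -/
noncomputable def alphaFn (β : ℝ) (b : ℕ) : ℝ :=
  1 - Real.exp (-((b : ℝ) * β)) * ((b : ℝ) * β) ^ b / (Nat.factorial b) -
    Real.exp (-((b : ℝ) * β)) * (1 - β) *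
      ∑ k ∈ Finset.range b, ((b : ℝ) * β) ^ k / (Nat.factorial k)

open Real Finset Nat

namespace Real

theorem hasSum_pow_div_factorial (x : ℝ) : HasSum (fun n ↦ x ^ n / n !) (exp x) := by
  rw [exp_eq_exp_ℝ]
  exact NormedSpace.expSeries_div_hasSum_exp x

theorem pow_add_div_factorial_le {x : ℝ} (hx : 0 ≤ x) (m n : ℕ) :
    x ^ (m + n) / (m + n)! ≤ x ^ n / n ! * (x ^ m / m !) := by
  have hfac : (n ! * m ! : ℝ) ≤ (m + n)! := by
    rw [add_comm]
    exact_mod_cast Nat.le_of_dvd (factorial_pos _) (factorial_mul_factorial_dvd_factorial_add n m)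
  rw [_root_.div_mul_div_comm, pow_add, mul_comm (x ^ n)]
  gcongr

theorem exp_sub_sum_range_le {x : ℝ} (hx : 0 ≤ x) (n : ℕ) :
    exp x - ∑ k ∈ range n, x ^ k / k ! ≤ x ^ n / n ! * exp x :=
  hasSum_le (fun m ↦ pow_add_div_factorial_le hx m n)
    ((hasSum_nat_add_iff' n).2 (hasSum_pow_div_factorial x))
    ((hasSum_pow_div_factorial x).mul_left _)

theorem exp_neg_mul_sum_range_le_one {x : ℝ} (hx : 0 ≤ x) (n : ℕ) :
    exp (-x) * ∑ k ∈ range n, x ^ k / k ! ≤ 1 := by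
  rw [exp_neg, inv_mul_le_iff₀ (exp_pos x), mul_one]
  exact sum_le_exp_of_nonneg hx n

theorem one_sub_exp_neg_mul_sum_range_le {x : ℝ} (hx : 0 ≤ x) (n : ℕ) :
    1 - exp (-x) * ∑ k ∈ range n, x ^ k / k ! ≤ x ^ n / n ! := by
  have h := mul_le_mul_of_nonneg_left (exp_sub_sum_range_le hx n) (exp_pos (-x)).le
  rwa [mul_sub, mul_left_comm, ← exp_add, neg_add_cancel, exp_zero, mul_one] at h

theorem natCast_mul_pow_div_factorial_le {β : ℝ} (hβ : 0 ≤ β) (n : ℕ) :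
    (n * β) ^ n / n ! ≤ (exp 1 * β) ^ n := by
  rw [mul_pow, mul_pow, ← exp_nat_mul, mul_one, mul_div_right_comm]
  gcongr
  exact pow_div_factorial_le_exp _ n.cast_nonneg n

end Real

theorem alphaFn_sub_self (β : ℝ) (b : ℕ) :
    alphaFn β b - β = (1 - β) * (1 - exp (-(b * β)) * ∑ k ∈ range b, (b * β) ^ k / k !) -
      exp (-(b * β)) * ((b * β) ^ b / b !) := by
  unfold alphaFn
  ring

theorem alphaFn_close_to_beta_general (b : ℕ) (β : ℝ) (hβ0 : 0 ≤ β) (hβ1 : β ≤ 1) :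
    |alphaFn β b - β| ≤ (Real.exp 1 * β) ^ b := by
  have hx : 0 ≤ (b : ℝ) * β := by positivity
  have hpoisson_upper := one_sub_exp_neg_mul_sum_range_le hx b
  have hpoisson_lower := exp_neg_mul_sum_range_le_one hx b
  have hexp : exp (-(b * β)) ≤ 1 := exp_le_one_iff.2 (by linarith)
  have hterm := natCast_mul_pow_div_factorial_le hβ0 b
  have hterm_nonneg : 0 ≤ (b * β : ℝ) ^ b / b ! := by positivity
  rw [alphaFn_sub_self, abs_le]
  constructor <;> nlinarith [exp_pos (-(b * β))]

/-- For every integer `b ≥ 1` and every real `β` with `0 ≤ β ≤ 1`, one has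
`|α(β,b) − β| ≤ (eβ)^b`; in particular, for fixed `β < 1/e` the gap is exponentially
small in `b`. -/
theorem alphaFn_close_to_beta (b : ℕ) (hb : 1 ≤ b) (β : ℝ) (hβ0 : 0 ≤ β) (hβ1 : β ≤ 1) :
    |alphaFn β b - β| ≤ (Real.exp 1 * β) ^ b :=
  alphaFn_close_to_beta_general b β hβ0 hβ1
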